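/- arXiv:1507.02972 — 2 statements merged into one kernel-verified Lean document; each statement's English description precedes it below -/
import Mathlib

section
/- For every $\epsilon > 0$ there exists $r \in \mathbb{N}$ such that for any integers $n, n_0$ with $n \geq r\, n_0$, there is a finite sequence of integers $m_0 < m_1 < \dots < m_k$ with $m_0 = n_0$, $m_k = n$, and $|m_i - 2 m_{i-1}| < \epsilon\, m_i$ for all $1 \leq i \leq k$. -/
/-!
Double `n₀` exactly `j` times, where `2 ^ j > 2 / ε`, to reach `N = 2 ^ j n₀`. If every value in
`[L, H]` is reachable from `n₀` by `ε`-doubling steps, then so is every `m ∈ [2L, 2H + d]` whenever `1 ≤ d ≤ εL`: step to `m` from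
`min ⌊m/2⌋ H`. Starting from `{N}`, the reachable interval `[2 ^ k N, 2 ^ k (N + k n₀)]` has relative
width growing linearly in `k`, so after `2 ^ j` stages it is `[L, 2L]` with `L = 2 ^ 2 ^ j N`.
Above `L`, every `m` is reached from `⌊m/2⌋`, since the error `m - 2⌊m/2⌋ ≤ 1` is below `εm`.
-/

open Relation

theorem Relation.TransGen.exists_seq {α : Type*} {r : α → α → Prop} {a b : α}
    (h : TransGen r a b) :
    ∃ (k : ℕ) (f : ℕ → α), 1 ≤ k ∧ f 0 = a ∧ f k = b ∧ ∀ i < k, r (f i) (f (i + 1)) := by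
  induction h with
  | single hab =>
    refine ⟨1, Function.update (fun _ => a) 1 _, le_rfl, rfl, Function.update_self .., ?_⟩
    intro i hi
    obtain rfl : i = 0 := by omega
    simpa using hab
  | @tail b c _ hbc ih =>
    obtain ⟨k, f, hk, hf0, hfk, hf⟩ := ih
    refine ⟨k + 1, Function.update f (k + 1) c, by omega, by simpa using hf0,
      Function.update_self .., fun i hi => ?_⟩
    rw [Function.update_of_ne (by omega)]
    rcases Nat.lt_succ_iff_lt_or_eq.mp hi with hik | rfl
    · rw [Function.update_of_ne (by omega)]
      exact hf i hik
    · rw [Function.update_self, hfk]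
      exact hbc

lemma pos_and_pos_of_mul_natCast_pos {x : ℝ} {n : ℕ} (h : 0 < x * n) : 0 < x ∧ 0 < n :=
  have hx := pos_of_mul_pos_left h n.cast_nonneg
  ⟨hx, Nat.cast_pos.mp (pos_of_mul_pos_right h hx.le)⟩

section Doubling

variable {ε : ℝ} {a : ℕ}

def DoublingStep (ε : ℝ) (a b : ℕ) : Prop :=
  a < b ∧ |(b : ℝ) - 2 * a| < ε * b

lemma doublingStep_of_two_mul_le {a b : ℕ} (ha : 0 < a) (hab : 2 * a ≤ b)
    (h : ((b - 2 * a : ℕ) : ℝ) < ε * b) : DoublingStep ε a b := by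
  refine ⟨by omega, ?_⟩
  have hab' : 2 * (a : ℝ) ≤ b := by exact_mod_cast hab
  push_cast [hab] at h
  rwa [abs_of_nonneg (sub_nonneg.mpr hab')]

lemma reflTransGen_doublingStep_two_pow_mul (hε : 0 < ε) (ha : 0 < a) (j : ℕ) :
    ReflTransGen (DoublingStep ε) a (2 ^ j * a) := by
  induction j with
  | zero => simpa using ReflTransGen.refl
  | succ j ih =>
    rw [pow_succ', mul_assoc]
    refine ih.tail (doublingStep_of_two_mul_le (by positivity) le_rfl ?_)
    rw [Nat.sub_self, Nat.cast_zero]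
    positivity

lemma reflTransGen_doublingStep_of_mem_Icc_two_mul {L H d : ℕ} (hLH : L ≤ H) (hd : 1 ≤ d)
    (hdL : (d : ℝ) ≤ ε * L) (h : ∀ m, L ≤ m → m ≤ H → ReflTransGen (DoublingStep ε) a m)
    (m : ℕ) (hm₁ : 2 * L ≤ m) (hm₂ : m ≤ 2 * H + d) : ReflTransGen (DoublingStep ε) a m := by
  obtain ⟨hε, hL⟩ := pos_and_pos_of_mul_natCast_pos
    (zero_lt_one.trans_le ((Nat.one_le_cast.mpr hd).trans hdL))
  have hm'L : L ≤ min (m / 2) H := le_min (by omega) hLH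
  refine (h _ hm'L (min_le_right _ _)).tail
    (doublingStep_of_two_mul_le (by omega) (by omega) ?_)
  calc ((m - 2 * min (m / 2) H : ℕ) : ℝ) ≤ d := by exact_mod_cast (by omega)
    _ ≤ ε * L := hdL
    _ ≤ ε * (min (m / 2) H : ℕ) := by gcongr
    _ < ε * m := by gcongr; omega

lemma reflTransGen_doublingStep_of_mem_Icc_two_pow_mul {N d : ℕ} (hd : 1 ≤ d)
    (hdN : 2 * (d : ℝ) ≤ ε * N) (hN : ReflTransGen (DoublingStep ε) a N) (k m : ℕ)
    (hm₁ : 2 ^ k * N ≤ m) (hm₂ : m ≤ 2 ^ k * (N + k * d)) :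
    ReflTransGen (DoublingStep ε) a m := by
  induction k generalizing m with
  | zero =>
    obtain rfl : m = N := by simp only [pow_zero, one_mul, zero_mul, add_zero] at hm₁ hm₂; omega
    exact hN
  | succ k ih =>
    refine reflTransGen_doublingStep_of_mem_Icc_two_mul (d := 2 ^ (k + 1) * d)
      (Nat.mul_le_mul_left _ (Nat.le_add_right _ _)) (Nat.mul_pos (Nat.two_pow_pos _) hd) ?_ ih m
      (hm₁.trans_eq' (by ring)) (hm₂.trans_eq (by ring))
    push_cast
    calc (2 : ℝ) ^ (k + 1) * d = 2 ^ k * (2 * d) := by ring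
      _ ≤ 2 ^ k * (ε * N) := by gcongr
      _ = ε * (2 ^ k * N) := by ring

lemma reflTransGen_doublingStep_of_le {L : ℕ} (hL : 1 < ε * L)
    (h : ∀ m, L ≤ m → m ≤ 2 * L → ReflTransGen (DoublingStep ε) a m) (m : ℕ) (hm : L ≤ m) :
    ReflTransGen (DoublingStep ε) a m := by
  obtain ⟨hε, hL₀⟩ := pos_and_pos_of_mul_natCast_pos (zero_lt_one.trans hL)
  induction m using Nat.strong_induction_on with
  | _ m ih =>
    by_cases hm₂ : m ≤ 2 * L
    · exact h m hm hm₂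
    refine (ih (m / 2) (by omega) (by omega)).tail
      (doublingStep_of_two_mul_le (by omega) (by omega) ?_)
    calc ((m - 2 * (m / 2) : ℕ) : ℝ) ≤ 1 := by exact_mod_cast (by omega)
      _ < ε * L := hL
      _ ≤ ε * m := by gcongr

end Doubling

/-- For every `ε > 0` there exists `r ∈ ℕ` such that for any integers `n, n₀` with
`n ≥ r n₀`, there is a finite strictly increasing sequence of integers
`m₀ < m₁ < ⋯ < m_k` with `m₀ = n₀`, `m_k = n`, and `|m_i - 2 m_{i-1}| < ε m_i`
for all `1 ≤ i ≤ k` (an `ε`-doubling sequence interpolating between `n₀` and `n`). -/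
theorem exists_doubling_sequence (ε : ℝ) (hε : 0 < ε) :
    ∃ r : ℕ, ∀ n n₀ : ℕ, 1 ≤ n₀ → r * n₀ ≤ n →
      ∃ (k : ℕ) (mseq : ℕ → ℕ), 1 ≤ k ∧ mseq 0 = n₀ ∧ mseq k = n ∧
        (∀ i, i < k → mseq i < mseq (i + 1)) ∧
        (∀ i, 1 ≤ i → i ≤ k → |(mseq i : ℝ) - 2 * (mseq (i - 1) : ℝ)| < ε * (mseq i : ℝ)) := by
  obtain ⟨j, hj⟩ := pow_unbounded_of_one_lt (2 / ε) one_lt_two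
  refine ⟨2 ^ 2 ^ j * 2 ^ j, fun n n₀ hn₀ hn => ?_⟩
  have hεN : 2 * (n₀ : ℝ) ≤ ε * (2 ^ j * n₀ : ℕ) := by
    rw [div_lt_iff₀ hε] at hj
    push_cast
    nlinarith [(Nat.one_le_cast (α := ℝ)).mpr hn₀]
  have hL : 1 < ε * (2 ^ 2 ^ j * (2 ^ j * n₀) : ℕ) := by
    calc (1 : ℝ) < 2 * n₀ := by norm_cast; omega
      _ ≤ ε * (2 ^ j * n₀ : ℕ) := hεN
      _ ≤ _ := mul_le_mul_of_nonneg_left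
        (by exact_mod_cast Nat.le_mul_of_pos_left _ (by positivity)) hε.le
  have hreach := reflTransGen_doublingStep_of_le hL
    (fun m hm₁ hm₂ => reflTransGen_doublingStep_of_mem_Icc_two_pow_mul hn₀ hεN
      (reflTransGen_doublingStep_two_pow_mul hε hn₀ j) (2 ^ j) m hm₁ (hm₂.trans_eq (by ring)))
    n (hn.trans_eq' (by ring))
  have hn₀n : n₀ < n := by
    have hr : 2 * 1 ≤ 2 ^ 2 ^ j * 2 ^ j :=
      Nat.mul_le_mul (Nat.one_lt_two_pow (by positivity)) Nat.one_le_two_pow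
    nlinarith
  obtain ⟨k, f, hk, hf0, hfk, hf⟩ :=
    ((reflTransGen_iff_eq_or_transGen.mp hreach).resolve_left hn₀n.ne').exists_seq
  refine ⟨k, f, hk, hf0, hfk, fun i hi => (hf i hi).1, fun i hi₁ hi₂ => ?_⟩
  simpa only [Nat.sub_add_cancel hi₁] using (hf (i - 1) (by omega)).2
end

section
/- Let $(X,\mu,T)$ be an ergodic measure-preserving system and $f: X \to \mathbb{R}$ a measurable function such that $f - f\circ T \in L^1(X,\mu)$. Then for $\mu$-almost every $x \in X$, $\lim_{n\to+\infty} \frac{1}{n} f(T^n x) = 0$. -/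
/-!
With `g = f - f ∘ T` the Birkhoff sums telescope, `S_n g x = f x - f (T^[n] x)`, so by Birkhoff's
ergodic theorem `f (T^[n] x) / n = f x / n - S_n g x / n → -∫ g` almost everywhere. This limit
must be `0`: as `T` preserves `μ`, `f ∘ T^[n] / n` has the same distribution as `f / n`, which
tends to `0` in measure.

Birkhoff's theorem for ergodic `T` comes from Hopf's maximal inequality: if `∫ g < K`, the set
where the Birkhoff sums of `g - K` are unbounded above is `T`-invariant, hence null or conull,
and the maximal inequality excludes conull.
-/

open MeasureTheory Filter Topology Set

section

variable {X : Type*}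

theorem birkhoffSum_sub_comp {G : Type*} [AddCommGroup G] (T : X → X) (f : X → G) (n : ℕ)
    (x : X) : birkhoffSum T (fun y => f y - f (T y)) n x = f x - f (T^[n] x) := by
  simp only [birkhoffSum, ← Function.iterate_succ_apply' T]
  exact Finset.sum_range_sub' (fun k => f (T^[k] x)) n

theorem bddAbove_range_birkhoffSum_apply_iff {G : Type*} [AddCommGroup G] [LinearOrder G]
    [IsOrderedAddMonoid G] (T : X → X) (g : X → G) (x : X) :
    BddAbove (range fun n => birkhoffSum T g n (T x)) ↔
      BddAbove (range fun n => birkhoffSum T g n x) := by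
  simp only [bddAbove_def, forall_mem_range]
  constructor
  · rintro ⟨C, hC⟩
    refine ⟨max 0 (g x + C), fun n => ?_⟩
    cases n with
    | zero => simp
    | succ n =>
      rw [birkhoffSum_succ']
      exact le_max_of_le_right (add_le_add_right (hC n) _)
  · rintro ⟨C, hC⟩
    exact ⟨C - g x, fun n => le_sub_iff_add_le'.2 (birkhoffSum_succ' T g n x ▸ hC (n + 1))⟩

theorem Measurable.birkhoffSum {M : Type*} [AddCommMonoid M] [MeasurableSpace M]
    [MeasurableAdd₂ M] [MeasurableSpace X] {T : X → X} {g : X → M} (hg : Measurable g)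
    (hT : Measurable T) (n : ℕ) : Measurable (birkhoffSum T g n) :=
  Finset.measurable_sum _ fun k _ => hg.comp (hT.iterate k)

theorem MeasureTheory.Integrable.birkhoffSum {E : Type*} [NormedAddCommGroup E]
    [MeasurableSpace X] {μ : Measure X} {T : X → X} {g : X → E} (hg : Integrable g μ)
    (hT : MeasurePreserving T μ μ) (n : ℕ) : Integrable (birkhoffSum T g n) μ :=
  integrable_finsetSum _ fun k _ => (hT.iterate k).integrable_comp_of_integrable hg

theorem tendsto_iterate_div_of_tendsto_birkhoffAverage {T : X → X} {f : X → ℝ} {x : X} {c : ℝ}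
    (h : Tendsto (birkhoffAverage ℝ T (fun y => f y - f (T y)) · x) atTop (𝓝 c)) :
    Tendsto (fun n : ℕ => f (T^[n] x) / n) atTop (𝓝 (-c)) := by
  have heq : (fun n : ℕ => f (T^[n] x) / n) =
      fun n => f x / n - birkhoffAverage ℝ T (fun y => f y - f (T y)) n x := by
    funext n
    rw [birkhoffAverage, birkhoffSum_sub_comp, smul_eq_mul]
    ring
  rw [heq]
  simpa using (tendsto_const_div_atTop_nhds_zero_nat (f x)).sub h

section MaximalErgodic

variable {T : X → X} {g : X → ℝ}

noncomputable def birkhoffMax (T : X → X) (g : X → ℝ) : ℕ → X → ℝ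
  | 0 => 0
  | N + 1 => fun x => max (birkhoffMax T g N x) (birkhoffSum T g (N + 1) x)

theorem birkhoffMax_succ (N : ℕ) (x : X) :
    birkhoffMax T g (N + 1) x = max (birkhoffMax T g N x) (birkhoffSum T g (N + 1) x) :=
  rfl

theorem birkhoffSum_le_birkhoffMax {n N : ℕ} (h : n ≤ N) (x : X) :
    birkhoffSum T g n x ≤ birkhoffMax T g N x := by
  induction N with
  | zero => simp [Nat.le_zero.1 h, birkhoffMax]
  | succ N ih =>
    rcases h.eq_or_lt with rfl | h
    · exact le_max_right _ _
    · exact (ih (Nat.lt_succ_iff.1 h)).trans (le_max_left _ _)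

theorem birkhoffMax_nonneg (N : ℕ) (x : X) : 0 ≤ birkhoffMax T g N x :=
  birkhoffSum_zero T g x ▸ birkhoffSum_le_birkhoffMax N.zero_le x

/-- Where the running maximum is positive it is attained at a positive time `n`, and
`S_n g x = g x + S_{n-1} g (T x)`. -/
theorem birkhoffMax_le_add_birkhoffMax_apply {N : ℕ} {x : X} (h : 0 < birkhoffMax T g N x) :
    birkhoffMax T g N x ≤ g x + birkhoffMax T g N (T x) := by
  induction N with
  | zero => simp [birkhoffMax] at h
  | succ N ih =>
    rcases le_total (birkhoffSum T g (N + 1) x) (birkhoffMax T g N x) with hle | hle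
    · rw [birkhoffMax_succ, max_eq_left hle] at h ⊢
      exact (ih h).trans (add_le_add_right (le_max_left _ _) _)
    · rw [birkhoffMax_succ, max_eq_right hle, birkhoffSum_succ']
      exact add_le_add_right (birkhoffSum_le_birkhoffMax N.le_succ (T x)) _

variable [MeasurableSpace X] {μ : Measure X}

theorem Measurable.birkhoffMax (hg : Measurable g) (hT : Measurable T) (N : ℕ) :
    Measurable (birkhoffMax T g N) := by
  induction N with
  | zero => exact measurable_const
  | succ N ih => exact ih.max (hg.birkhoffSum hT (N + 1))

theorem MeasureTheory.Integrable.birkhoffMax (hg : Integrable g μ)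
    (hT : MeasurePreserving T μ μ) (N : ℕ) : Integrable (birkhoffMax T g N) μ := by
  induction N with
  | zero => exact integrable_zero X ℝ μ
  | succ N ih => exact ih.sup (hg.birkhoffSum hT (N + 1))

theorem setIntegral_birkhoffMax_pos_nonneg (hT : MeasurePreserving T μ μ) (hgm : Measurable g)
    (hg : Integrable g μ) (N : ℕ) : 0 ≤ ∫ x in {x | 0 < birkhoffMax T g N x}, g x ∂μ := by
  set M := birkhoffMax T g N
  set A := {x | 0 < M x}
  have hMm : Measurable M := hgm.birkhoffMax hT.measurable N
  have hM : Integrable M μ := hg.birkhoffMax hT N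
  have hA : MeasurableSet A := measurableSet_lt measurable_const hMm
  have hMT : Integrable (M ∘ T) μ := hT.integrable_comp_of_integrable hM
  have hM_A : ∫ x in A, M x ∂μ = ∫ x, M x ∂μ := by
    have hM_off : ∫ x in Aᶜ, M x ∂μ = 0 := setIntegral_eq_zero_of_forall_eq_zero
      fun x (hx : ¬0 < M x) => (not_lt.1 hx).antisymm (birkhoffMax_nonneg N x)
    rw [← integral_add_compl hA hM, hM_off, add_zero]
  calc (0 : ℝ)
    _ = ∫ x, M x ∂μ - ∫ x, M (T x) ∂μ := by
      rw [← integral_map hT.aemeasurable hMm.aestronglyMeasurable, hT.map_eq, sub_self]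
    _ ≤ ∫ x in A, M x ∂μ - ∫ x in A, M (T x) ∂μ := by
      rw [hM_A]
      exact sub_le_sub_left
        (setIntegral_le_integral hMT (.of_forall fun x => birkhoffMax_nonneg N (T x))) _
    _ = ∫ x in A, (M x - M (T x)) ∂μ := (integral_sub hM.integrableOn hMT.integrableOn).symm
    _ ≤ ∫ x in A, g x ∂μ := setIntegral_mono_on (hM.sub hMT).integrableOn hg.integrableOn hA
      fun x hx => by linarith [birkhoffMax_le_add_birkhoffMax_apply (N := N) hx]

theorem integral_nonneg_of_ae_exists_birkhoffSum_pos (hT : MeasurePreserving T μ μ)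
    (hgm : Measurable g) (hg : Integrable g μ) (h : ∀ᵐ x ∂μ, ∃ n, 0 < birkhoffSum T g n x) :
    0 ≤ ∫ x, g x ∂μ := by
  set A : ℕ → Set X := fun N => {x | 0 < birkhoffMax T g N x}
  have hA : ∀ N, MeasurableSet (A N) := fun N =>
    measurableSet_lt measurable_const (hgm.birkhoffMax hT.measurable N)
  have hA_mono : Monotone A := monotone_nat_of_le_succ fun N x hx =>
    show 0 < birkhoffMax T g (N + 1) x from lt_max_of_lt_left hx
  have hA_ae : ⋃ N, A N =ᵐ[μ] (univ : Set X) := eventuallyEq_univ.2 <| h.mono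
    fun x ⟨n, hn⟩ => mem_iUnion.2 ⟨n, hn.trans_le (birkhoffSum_le_birkhoffMax le_rfl x)⟩
  have hlim := tendsto_setIntegral_of_monotone hA hA_mono hg.integrableOn
  rw [setIntegral_congr_set hA_ae, setIntegral_univ] at hlim
  exact ge_of_tendsto' hlim (setIntegral_birkhoffMax_pos_nonneg hT hgm hg)

end MaximalErgodic

section Ergodic

variable [MeasurableSpace X] {μ : Measure X} {T : X → X} {g : X → ℝ}

theorem Ergodic.ae_bddAbove_birkhoffSum (hT : Ergodic T μ) (hgm : Measurable g)
    (hg : Integrable g μ) (hneg : ∫ x, g x ∂μ < 0) :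
    ∀ᵐ x ∂μ, BddAbove (range fun n => birkhoffSum T g n x) := by
  have hE : MeasurableSet {x | BddAbove (range fun n => birkhoffSum T g n x)} :=
    measurableSet_bddAbove_range fun n => hgm.birkhoffSum hT.measurable n
  have hE_inv : T ⁻¹' {x | BddAbove (range fun n => birkhoffSum T g n x)} =
      {x | BddAbove (range fun n => birkhoffSum T g n x)} :=
    ext fun x => bddAbove_range_birkhoffSum_apply_iff T g x
  refine (hT.ae_mem_or_ae_notMem hE hE_inv).resolve_right fun h => hneg.not_ge ?_
  refine integral_nonneg_of_ae_exists_birkhoffSum_pos hT.toMeasurePreserving hgm hg ?_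
  filter_upwards [h] with x hx
  obtain ⟨_, ⟨n, rfl⟩, hn⟩ := not_bddAbove_iff.1 hx 0
  exact ⟨n, hn⟩

variable [IsProbabilityMeasure μ]

theorem Ergodic.ae_eventually_birkhoffAverage_lt (hT : Ergodic T μ) (hgm : Measurable g)
    (hg : Integrable g μ) {K : ℝ} (hK : ∫ x, g x ∂μ < K) :
    ∀ᵐ x ∂μ, ∀ᶠ n in atTop, birkhoffAverage ℝ T g n x < K := by
  obtain ⟨K', hK', hK'K⟩ := exists_between hK
  have hbdd := hT.ae_bddAbove_birkhoffSum (g := fun x => g x - K') (hgm.sub_const K')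
    (hg.sub (integrable_const K')) (by
      rw [integral_sub hg (integrable_const _), integral_const, probReal_univ, one_smul]
      linarith)
  filter_upwards [hbdd] with x ⟨C, hC⟩
  have hlim : Tendsto (fun n : ℕ => K' + C / n) atTop (𝓝 K') := by
    simpa using tendsto_const_nhds.add (tendsto_const_div_atTop_nhds_zero_nat C)
  filter_upwards [hlim.eventually (gt_mem_nhds hK'K), eventually_gt_atTop 0]
    with n hn hn0
  have hsum : birkhoffSum T g n x - n * K' ≤ C := by
    simpa [birkhoffSum, Finset.sum_sub_distrib] using hC ⟨n, rfl⟩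
  refine lt_of_le_of_lt ?_ hn
  rw [birkhoffAverage, smul_eq_mul, inv_mul_le_iff₀ (by positivity), mul_add,
    mul_div_cancel₀ _ (by positivity)]
  linarith

theorem Ergodic.ae_forall_eventually_birkhoffAverage_lt (hT : Ergodic T μ) (hgm : Measurable g)
    (hg : Integrable g μ) :
    ∀ᵐ x ∂μ, ∀ K, ∫ x, g x ∂μ < K → ∀ᶠ n in atTop, birkhoffAverage ℝ T g n x < K := by
  have h := ae_all_iff.2 fun j : ℕ =>
    hT.ae_eventually_birkhoffAverage_lt hgm hg
      (lt_add_of_pos_right (∫ x, g x ∂μ) (Nat.one_div_pos_of_nat (n := j)))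
  filter_upwards [h] with x hx K hK
  obtain ⟨j, hj⟩ := exists_nat_one_div_lt (sub_pos.2 hK)
  exact (hx j).mono fun n hn => hn.trans (by linarith)

theorem Ergodic.ae_tendsto_birkhoffAverage (hT : Ergodic T μ) (hgm : Measurable g)
    (hg : Integrable g μ) :
    ∀ᵐ x ∂μ, Tendsto (birkhoffAverage ℝ T g · x) atTop (𝓝 (∫ x, g x ∂μ)) := by
  filter_upwards [hT.ae_forall_eventually_birkhoffAverage_lt hgm hg,
    hT.ae_forall_eventually_birkhoffAverage_lt hgm.neg hg.neg] with x hupper hlower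
  refine tendsto_order.2 ⟨fun a ha => ?_, hupper⟩
  have := hlower (-a) (by simpa only [Pi.neg_apply, integral_neg] using neg_lt_neg ha)
  simp only [birkhoffAverage_neg, Pi.neg_apply] at this
  exact this.mono fun n hn => neg_lt_neg_iff.1 hn

end Ergodic

section IterateDiv

variable [MeasurableSpace X] {μ : Measure X}

theorem tendstoInMeasure_const_of_comp_measurePreserving {ι : Type*} {l : Filter ι}
    {S : ι → X → X} (hS : ∀ i, MeasurePreserving (S i) μ μ) {φ : ι → X → ℝ}
    (hφ : ∀ i, Measurable (φ i)) {a : ℝ}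
    (h : TendstoInMeasure μ (fun i x => φ i (S i x)) l fun _ => a) :
    TendstoInMeasure μ φ l fun _ => a := by
  rw [tendstoInMeasure_iff_dist] at h ⊢
  refine fun ε hε => (h ε hε).congr fun i => ?_
  exact (hS i).measure_preimage
    (measurableSet_le measurable_const ((hφ i).dist measurable_const)).nullMeasurableSet

theorem eq_zero_of_ae_tendsto_iterate_div [IsFiniteMeasure μ] [NeZero μ] {T : X → X}
    {f : X → ℝ} (hT : MeasurePreserving T μ μ) (hf : Measurable f) {a : ℝ}
    (h : ∀ᵐ x ∂μ, Tendsto (fun n : ℕ => f (T^[n] x) / n) atTop (𝓝 a)) : a = 0 := by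
  have h_iter : TendstoInMeasure μ (fun (n : ℕ) x => f (T^[n] x) / n) atTop fun _ => a :=
    tendstoInMeasure_of_tendsto_ae
      (fun n => ((hf.comp (hT.measurable.iterate n)).div_const _).aestronglyMeasurable) h
  have h_a : TendstoInMeasure μ (fun (n : ℕ) x => f x / n) atTop fun _ => a :=
    tendstoInMeasure_const_of_comp_measurePreserving (fun n => hT.iterate n)
      (fun n => hf.div_const _) h_iter
  have h_0 : TendstoInMeasure μ (fun (n : ℕ) x => f x / n) atTop fun _ => 0 :=
    tendstoInMeasure_of_tendsto_ae (fun n => (hf.div_const _).aestronglyMeasurable)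
      (.of_forall fun x => tendsto_const_div_atTop_nhds_zero_nat (f x))
  exact (tendstoInMeasure_ae_unique h_a h_0).exists.choose_spec

end IterateDiv

end

/-- Let `(X, μ, T)` be an ergodic measure-preserving system and `f : X → ℝ` measurable
with `f - f ∘ T ∈ L¹(μ)`. Then for `μ`-a.e. `x`, `(1/n) f(Tⁿ x) → 0`. -/
theorem tendsto_div_iterate_of_sub_comp_integrable
    {X : Type*} [MeasurableSpace X] (μ : Measure X) [IsProbabilityMeasure μ]
    (T : X → X) (hT : Ergodic T μ) (f : X → ℝ) (hf : Measurable f)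
    (hL1 : Integrable (fun x => f x - f (T x)) μ) :
    ∀ᵐ x ∂μ, Filter.Tendsto (fun n : ℕ => f (T^[n] x) / (n : ℝ)) Filter.atTop (𝓝 0) := by
  have hTm := hT.toMeasurePreserving
  have h := (hT.ae_tendsto_birkhoffAverage (hf.sub (hf.comp hTm.measurable)) hL1).mono
    fun x hx => tendsto_iterate_div_of_tendsto_birkhoffAverage hx
  rwa [eq_zero_of_ae_tendsto_iterate_div hTm hf h] at h
end
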